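/- arXiv:2506.18911 — 2 statements merged into one kernel-verified Lean document; each statement's English description precedes it below -/
import Mathlib

section
/- For an integrable function f : ℝ² → ℝ, the 2D Fourier transform of f evaluated at the point λ·n(φ), where n(φ) = (cos φ, sin φ) and λ ∈ ℝ, equals the 1D Fourier transform (in the radial variable τ) of the Radon transform R[f](τ, φ) = ∫_{ℝ²} f(x) δ(τ − ⟨n(φ), x⟩) dx; equivalently, ∫_{ℝ²} f(x) e^{−iλ⟨n(φ),x⟩} dx = ∫_ℝ e^{−iλτ} (∫_{⟨n(φ),x⟩=τ} f) dτ. (Fourier slice theorem in dimension 2.) -/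
/-! The line `⟨n(φ), x⟩ = τ` is the image of the vertical line `{τ} × ℝ` under the rotation by
`φ`. Rotations preserve Lebesgue measure, so Fubini in rotated coordinates gives
`∫ f = ∫ τ, R[f](τ, φ)` for every integrable `f`; applying this to `f(x) e^{-iλ⟨n(φ), x⟩}`, whose
exponential factor is the constant `e^{-iλτ}` along the line of parameter `τ`, gives the theorem. -/

open MeasureTheory Real Set

noncomputable def radon (f : ℝ × ℝ → ℂ) (τ φ : ℝ) : ℂ :=
  ∫ s : ℝ, f (τ * Real.cos φ - s * Real.sin φ, τ * Real.sin φ + s * Real.cos φ)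

theorem LinearEquiv.measurePreserving_of_abs_det_eq_one {E : Type*} [NormedAddCommGroup E]
    [NormedSpace ℝ E] [MeasurableSpace E] [BorelSpace E] [FiniteDimensional ℝ E]
    (μ : Measure E) [μ.IsAddHaarMeasure] (e : E ≃ₗ[ℝ] E)
    (he : |LinearMap.det (e : E →ₗ[ℝ] E)| = 1) : MeasurePreserving e μ μ := by
  have hdet : LinearMap.det (e : E →ₗ[ℝ] E) ≠ 0 := e.isUnit_det'.ne_zero
  refine ⟨e.toContinuousLinearEquiv.continuous.measurable, ?_⟩
  rw [← LinearEquiv.coe_coe, Measure.map_linearMap_addHaar_eq_smul_addHaar μ hdet, abs_inv, he]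
  simp

noncomputable def planeRotation (φ : ℝ) : (ℝ × ℝ) ≃ₗ[ℝ] (ℝ × ℝ) where
  toFun x := (x.1 * cos φ - x.2 * sin φ, x.1 * sin φ + x.2 * cos φ)
  invFun x := (x.1 * cos φ + x.2 * sin φ, x.2 * cos φ - x.1 * sin φ)
  map_add' x y := by ext <;> simp only [Prod.fst_add, Prod.snd_add] <;> ring
  map_smul' c x := by ext <;> simp only [Prod.smul_fst, Prod.smul_snd, smul_eq_mul,
    RingHom.id_apply] <;> ring
  left_inv x := by
    ext
    · linear_combination x.1 * sin_sq_add_cos_sq φ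
    · linear_combination x.2 * sin_sq_add_cos_sq φ
  right_inv x := by
    ext
    · linear_combination x.1 * sin_sq_add_cos_sq φ
    · linear_combination x.2 * sin_sq_add_cos_sq φ

lemma det_planeRotation (φ : ℝ) :
    LinearMap.det (planeRotation φ : (ℝ × ℝ) →ₗ[ℝ] ℝ × ℝ) = 1 := by
  rw [← LinearMap.det_toMatrix (Module.Basis.finTwoProd ℝ), Matrix.det_fin_two]
  simp [LinearMap.toMatrix_apply, planeRotation, Module.Basis.finTwoProd, ← sq, add_comm]

lemma measurePreserving_planeRotation (φ : ℝ) :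
    MeasurePreserving (planeRotation φ) (volume : Measure (ℝ × ℝ)) volume :=
  (planeRotation φ).measurePreserving_of_abs_det_eq_one volume (by rw [det_planeRotation, abs_one])

lemma radon_eq_integral_planeRotation (f : ℝ × ℝ → ℂ) (τ φ : ℝ) :
    radon f τ φ = ∫ s : ℝ, f (planeRotation φ (τ, s)) :=
  rfl

theorem integral_radon {f : ℝ × ℝ → ℂ} (hf : Integrable f) (φ : ℝ) :
    ∫ τ : ℝ, radon f τ φ = ∫ x : ℝ × ℝ, f x := by
  have hrot := measurePreserving_planeRotation φ
  have hemb := (planeRotation φ).toContinuousLinearEquiv.toHomeomorph.measurableEmbedding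
  have hf_rot : Integrable (fun x ↦ f (planeRotation φ x)) (volume.prod volume) :=
    (hrot.integrable_comp_emb hemb).2 hf
  simp_rw [← hrot.integral_comp hemb f, radon_eq_integral_planeRotation, Measure.volume_eq_prod]
  exact (integral_prod _ hf_rot).symm

lemma inner_planeRotation (φ τ s : ℝ) :
    cos φ * (planeRotation φ (τ, s)).1 + sin φ * (planeRotation φ (τ, s)).2 = τ := by
  simp only [planeRotation, LinearEquiv.coe_mk, LinearMap.coe_mk, AddHom.coe_mk]
  linear_combination τ * sin_sq_add_cos_sq φ

lemma radon_mul_comp_inner (f : ℝ × ℝ → ℂ) (h : ℝ → ℂ) (τ φ : ℝ) :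
    radon (fun x ↦ h (cos φ * x.1 + sin φ * x.2) * f x) τ φ = h τ * radon f τ φ := by
  simp only [radon_eq_integral_planeRotation, inner_planeRotation, integral_const_mul]

lemma norm_exp_neg_I_mul (lam t : ℝ) : ‖Complex.exp (-Complex.I * lam * t)‖ = 1 := by
  rw [show -Complex.I * lam * t = ((-lam * t : ℝ) : ℂ) * Complex.I by push_cast; ring]
  exact Complex.norm_exp_ofReal_mul_I _

/-- Fourier slice theorem in dimension 2. -/
theorem fourier_slice (f : ℝ × ℝ → ℂ) (hf : Integrable f) (lam φ : ℝ) :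
    (∫ x : ℝ × ℝ, f x *
        Complex.exp (-Complex.I * (lam : ℂ) *
          ((Real.cos φ * x.1 + Real.sin φ * x.2 : ℝ) : ℂ)))
      = ∫ τ : ℝ, Complex.exp (-Complex.I * (lam : ℂ) * (τ : ℂ)) * radon f τ φ := by
  set e : ℝ → ℂ := fun t ↦ Complex.exp (-Complex.I * lam * t)
  have hint : Integrable (fun x : ℝ × ℝ ↦ e (cos φ * x.1 + sin φ * x.2) * f x) :=
    hf.bdd_mul (by fun_prop) (.of_forall fun x ↦ (norm_exp_neg_I_mul lam _).le)
  calc _ = ∫ x : ℝ × ℝ, e (cos φ * x.1 + sin φ * x.2) * f x := by simp_rw [mul_comm (f _)]; rfl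
    _ = ∫ τ : ℝ, radon (fun x ↦ e (cos φ * x.1 + sin φ * x.2) * f x) τ φ :=
      (integral_radon hint φ).symm
    _ = _ := by simp_rw [radon_mul_comp_inner]; rfl
end

section
/- Sokhotski–Plemelj decomposition of the regularized kernel: for every Schwartz (or compactly supported smooth) test function ψ : ℝ → ℂ, lim_{ε→0⁺} ∫_ℝ ψ(η)/(η − iε) dη = P.V.∫_ℝ ψ(η)/η dη + iπ·ψ(0). -/
/-!
Split `ψ = g + ψ(0) · 𝟙_{[-1,1]}`. Since `g` vanishes at `0` and `ψ` is Lipschitz, `g(η)/η` is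
integrable, and as `|η - iε| ≥ |η|`, dominated convergence sends both regularizations of `g` to
`∫ g(η)/η`. For the step, the truncated principal value vanishes by oddness, while
`∫_{-1}^{1} dη/(η - iε) = log(1 - iε) - log(-1 - iε)` tends to `0 - (-iπ) = iπ`: the point
`-1 - iε` approaches the branch cut of `log` from below.
-/

open MeasureTheory Real Set Complex Filter

open scoped Topology

theorem SchwartzMap.norm_sub_le_seminorm_mul_abs {F : Type*} [NormedAddCommGroup F]
    [NormedSpace ℝ F] (ψ : SchwartzMap ℝ F) (x y : ℝ) :
    ‖ψ y - ψ x‖ ≤ SchwartzMap.seminorm ℝ 0 1 ψ * |y - x| := by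
  simpa [Real.norm_eq_abs] using convex_univ.norm_image_sub_le_of_norm_deriv_le
    (fun z _ => ψ.differentiableAt) (fun z _ => by simpa using ψ.le_seminorm' ℝ 0 1 z)
    (mem_univ x) (mem_univ y)

theorem integral_eq_zero_of_odd {G E : Type*} [MeasurableSpace G] [AddGroup G] [MeasurableNeg G]
    [NormedAddCommGroup E] [NormedSpace ℝ E] {μ : Measure G} [μ.IsNegInvariant] {g : G → E}
    (hg : ∀ x, g (-x) = -g x) : ∫ x, g x ∂μ = 0 := by
  have h : ∫ x, g x ∂μ = -∫ x, g x ∂μ := by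
    simp_rw [← integral_neg, ← hg, integral_neg_eq_self]
  have h2 : (2 : ℝ) • ∫ x, g x ∂μ = 0 := by
    rw [two_smul]; nth_rewrite 2 [h]; exact add_neg_cancel _
  exact (smul_eq_zero.mp h2).resolve_left two_ne_zero

theorem Set.indicator_neg_of_odd {α β : Type*} [InvolutiveNeg α] [NegZeroClass β] {s : Set α}
    {g : α → β} (hs : ∀ x, -x ∈ s ↔ x ∈ s) (hg : ∀ x, g (-x) = -g x) (x : α) :
    s.indicator g (-x) = -s.indicator g x := by
  by_cases hx : x ∈ s <;> simp [Set.indicator, hs, hx, hg]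

theorem neg_mem_Icc_neg_self_iff {x a : ℝ} : -x ∈ Icc (-a) a ↔ x ∈ Icc (-a) a := by
  simp only [mem_Icc, neg_le_neg_iff, neg_le]
  exact and_comm

theorem abs_le_norm_ofReal_sub_I_mul (η ε : ℝ) : |η| ≤ ‖(η : ℂ) - I * ε‖ := by
  simpa using abs_re_le_norm ((η : ℂ) - I * ε)

theorem abs_le_norm_ofReal_sub_I_mul' (η ε : ℝ) : |ε| ≤ ‖(η : ℂ) - I * ε‖ := by
  simpa using abs_im_le_norm ((η : ℂ) - I * ε)

theorem ofReal_sub_I_mul_mem_slitPlane (η : ℝ) {ε : ℝ} (hε : ε ≠ 0) :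
    (η : ℂ) - I * ε ∈ slitPlane := by
  simp [mem_slitPlane_iff, hε]

theorem intervalIntegral_inv_ofReal_sub_I_mul (a b : ℝ) {ε : ℝ} (hε : ε ≠ 0) :
    ∫ η in a..b, ((η : ℂ) - I * ε)⁻¹ = Complex.log (b - I * ε) - Complex.log (a - I * ε) := by
  refine intervalIntegral.integral_eq_sub_of_hasDerivAt
    (f := fun η : ℝ => Complex.log (η - I * ε)) (fun x _ => ?_) ?_
  · simpa using ((hasDerivAt_log (ofReal_sub_I_mul_mem_slitPlane x hε)).comp (x : ℂ)
      ((hasDerivAt_id _).sub_const (I * ε))).comp_ofReal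
  · exact (by fun_prop : Continuous fun η : ℝ => (η : ℂ) - I * ε).inv₀
      (fun η => slitPlane_ne_zero (ofReal_sub_I_mul_mem_slitPlane η hε)) |>.intervalIntegrable _ _

theorem tendsto_intervalIntegral_inv_ofReal_sub_I_mul :
    Tendsto (fun ε : ℝ => ∫ η in (-1 : ℝ)..1, ((η : ℂ) - I * ε)⁻¹) (𝓝[>] 0) (𝓝 (I * π)) := by
  have hcont : Tendsto (fun ε : ℝ => (I * ε : ℂ)) (𝓝[>] 0) (𝓝 0) :=
    tendsto_nhdsWithin_of_tendsto_nhds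
      (by simpa using (by fun_prop : Continuous fun ε : ℝ => (I * ε : ℂ)).tendsto 0)
  have hright : Tendsto (fun ε : ℝ => Complex.log (1 - I * ε)) (𝓝[>] 0) (𝓝 0) := by
    simpa [Function.comp_def] using
      (continuousAt_clog (by simp)).tendsto.comp (tendsto_const_nhds (x := (1 : ℂ)).sub hcont)
  have hleft : Tendsto (fun ε : ℝ => Complex.log (-1 - I * ε)) (𝓝[>] 0) (𝓝 (-(π * I))) := by
    have hbelow : Tendsto (fun ε : ℝ => -1 - I * ε) (𝓝[>] 0) (𝓝[{z | z.im < 0}] (-1)) := by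
      refine tendsto_nhdsWithin_iff.mpr ⟨by simpa using tendsto_const_nhds.sub hcont, ?_⟩
      filter_upwards [self_mem_nhdsWithin] with ε (hε : 0 < ε)
      simpa using hε
    simpa [Function.comp_def] using (tendsto_log_nhdsWithin_im_neg_of_re_neg_of_im_zero
      (z := -1) (by simp) (by simp)).comp hbelow
  have hlog := hright.sub hleft
  rw [zero_sub, neg_neg, mul_comm] at hlog
  refine hlog.congr' ?_
  filter_upwards [self_mem_nhdsWithin] with ε (hε : 0 < ε)
  rw [intervalIntegral_inv_ofReal_sub_I_mul _ _ hε.ne']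
  push_cast
  rfl

theorem measurableSet_le_abs (δ : ℝ) : MeasurableSet {x : ℝ | δ ≤ |x|} :=
  measurableSet_le measurable_const measurable_abs

theorem tendsto_setIntegral_le_abs {E : Type*} [NormedAddCommGroup E] [NormedSpace ℝ E]
    {g : ℝ → E} (hg : Integrable g) :
    Tendsto (fun δ : ℝ => ∫ x in {x | δ ≤ |x|}, g x) (𝓝[>] 0) (𝓝 (∫ x, g x)) := by
  simp_rw [← integral_indicator (measurableSet_le_abs _)]
  refine tendsto_integral_filter_of_dominated_convergence (‖g ·‖)
    (.of_forall fun δ => hg.1.indicator (measurableSet_le_abs δ))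
    (.of_forall fun δ => .of_forall fun x => norm_indicator_le_norm_self _ _) hg.norm ?_
  filter_upwards [Measure.ae_ne volume 0] with x hx
  refine tendsto_const_nhds.congr' ?_
  filter_upwards [Ioo_mem_nhdsGT (abs_pos.mpr hx)] with δ hδ
  exact (indicator_of_mem (show x ∈ {x : ℝ | δ ≤ |x|} from hδ.2.le) g).symm

theorem integrableOn_div_of_le_abs {g : ℝ → ℂ} (hg : Integrable g) {δ : ℝ} (hδ : 0 < δ) :
    IntegrableOn (fun x => g x / x) {x | δ ≤ |x|} := by
  refine Integrable.mono' (hg.norm.div_const δ).integrableOn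
    (hg.1.div₀ measurable_ofReal.aestronglyMeasurable).restrict ?_
  refine (ae_restrict_iff' (measurableSet_le_abs δ)).mpr (.of_forall fun x (hx : δ ≤ |x|) => ?_)
  rw [norm_div, norm_real, Real.norm_eq_abs]
  exact div_le_div_of_nonneg_left (norm_nonneg _) hδ hx

theorem integrable_div_ofReal_sub_I_mul {g : ℝ → ℂ} (hg : Integrable g) {ε : ℝ} (hε : ε ≠ 0) :
    Integrable (fun x => g x / ((x : ℂ) - I * ε)) := by
  refine Integrable.mono' (hg.norm.div_const |ε|)
    (hg.1.div₀ (by fun_prop : Continuous fun x : ℝ => (x : ℂ) - I * ε).aestronglyMeasurable)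
    (.of_forall fun x => ?_)
  rw [norm_div]
  exact div_le_div_of_nonneg_left (norm_nonneg _) (abs_pos.mpr hε)
    (abs_le_norm_ofReal_sub_I_mul' x ε)

theorem integrable_indicator_Icc_const {E : Type*} [NormedAddCommGroup E] (a b : ℝ) (c : E) :
    Integrable ((Icc a b).indicator fun _ => c) :=
  (integrableOn_const measure_Icc_lt_top.ne).integrable_indicator measurableSet_Icc

section

variable {f : ℝ → ℂ} {C : ℝ}

noncomputable def subValueAtZero (f : ℝ → ℂ) (x : ℝ) : ℂ :=
  f x - (Icc (-1) 1).indicator (fun _ => f 0) x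

theorem aestronglyMeasurable_subValueAtZero (hf : AEStronglyMeasurable f) :
    AEStronglyMeasurable (subValueAtZero f) :=
  hf.sub (aestronglyMeasurable_const.indicator measurableSet_Icc)

theorem norm_subValueAtZero_div_le (hlip : ∀ x, ‖f x - f 0‖ ≤ C * |x|) (x : ℝ) :
    ‖subValueAtZero f x / x‖ ≤ (Icc (-1) 1).indicator (fun _ => C) x + ‖f x‖ := by
  have hC : 0 ≤ C := by simpa using (norm_nonneg _).trans (hlip 1)
  rw [norm_div, norm_real, Real.norm_eq_abs]
  by_cases hx : x ∈ Icc (-1 : ℝ) 1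
  · simp only [subValueAtZero, indicator_of_mem hx]
    exact (div_le_of_le_mul₀ (abs_nonneg x) hC (hlip x)).trans
      (le_add_of_nonneg_right (norm_nonneg _))
  · have h1 : 1 < |x| := by rwa [mem_Icc, ← abs_le, not_le] at hx
    simp only [subValueAtZero, indicator_of_notMem hx, sub_zero, zero_add]
    exact div_le_self (norm_nonneg _) h1.le

theorem integrable_subValueAtZero_div (hf : Integrable f) (hlip : ∀ x, ‖f x - f 0‖ ≤ C * |x|) :
    Integrable fun x => subValueAtZero f x / x :=
  Integrable.mono' ((integrable_indicator_Icc_const _ _ C).add hf.norm)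
    ((aestronglyMeasurable_subValueAtZero hf.1).div₀ measurable_ofReal.aestronglyMeasurable)
    (.of_forall (norm_subValueAtZero_div_le hlip))

theorem setIntegral_div_eq_setIntegral_subValueAtZero_div (hf : Integrable f) {δ : ℝ}
    (hδ : 0 < δ) :
    ∫ x in {x | δ ≤ |x|}, f x / x = ∫ x in {x | δ ≤ |x|}, subValueAtZero f x / x := by
  set c : ℝ → ℂ := (Icc (-1) 1).indicator (fun _ => f 0)
  have hc : Integrable c := integrable_indicator_Icc_const _ _ _
  have hodd : ∫ x in {x | δ ≤ |x|}, c x / x = 0 := by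
    have hc_even (x : ℝ) : c (-x) = c x := by
      simp only [c, indicator_apply, neg_mem_Icc_neg_self_iff]
    rw [← integral_indicator (measurableSet_le_abs δ)]
    exact integral_eq_zero_of_odd (indicator_neg_of_odd (by simp) fun x => by
      rw [hc_even, ofReal_neg, div_neg])
  rw [← sub_zero (∫ x in _, f x / x), ← hodd,
    ← integral_sub (integrableOn_div_of_le_abs hf hδ) (integrableOn_div_of_le_abs hc hδ)]
  exact integral_congr_ae (.of_forall fun x => (sub_div _ _ _).symm)

theorem integral_div_ofReal_sub_I_mul_eq (hf : Integrable f) {ε : ℝ} (hε : ε ≠ 0) :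
    ∫ x, f x / ((x : ℂ) - I * ε) =
      (∫ x, subValueAtZero f x / ((x : ℂ) - I * ε)) +
        (∫ x in (-1 : ℝ)..1, ((x : ℂ) - I * ε)⁻¹) * f 0 := by
  set c : ℝ → ℂ := (Icc (-1) 1).indicator (fun _ => f 0)
  have hc : Integrable c := integrable_indicator_Icc_const _ _ _
  have hcut : ∫ x, c x / ((x : ℂ) - I * ε) = (∫ x in (-1 : ℝ)..1, ((x : ℂ) - I * ε)⁻¹) * f 0 := by
    have : (fun x : ℝ => c x / ((x : ℂ) - I * ε)) =
        (Icc (-1) 1).indicator (fun x : ℝ => ((x : ℂ) - I * ε)⁻¹ * f 0) := by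
      ext x
      by_cases hx : x ∈ Icc (-1 : ℝ) 1 <;> simp [c, hx, div_eq_inv_mul]
    rw [this, integral_indicator measurableSet_Icc, integral_Icc_eq_integral_Ioc,
      ← intervalIntegral.integral_of_le (by norm_num), intervalIntegral.integral_mul_const]
  rw [← hcut, ← sub_eq_iff_eq_add, ← integral_sub (integrable_div_ofReal_sub_I_mul hf hε)
    (integrable_div_ofReal_sub_I_mul hc hε)]
  exact integral_congr_ae (.of_forall fun x => (sub_div _ _ _).symm)

theorem tendsto_integral_subValueAtZero_div_ofReal_sub_I_mul (hf : Integrable f)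
    (hlip : ∀ x, ‖f x - f 0‖ ≤ C * |x|) :
    Tendsto (fun ε : ℝ => ∫ x, subValueAtZero f x / ((x : ℂ) - I * ε)) (𝓝[>] 0)
      (𝓝 (∫ x, subValueAtZero f x / x)) := by
  refine tendsto_integral_filter_of_dominated_convergence
    (fun x : ℝ => ‖subValueAtZero f x / x‖)
    (.of_forall fun ε => (aestronglyMeasurable_subValueAtZero hf.1).div₀
      (by fun_prop : Continuous fun x : ℝ => (x : ℂ) - I * ε).aestronglyMeasurable)
    (.of_forall fun ε => ?_) (integrable_subValueAtZero_div hf hlip).norm ?_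
  · filter_upwards [Measure.ae_ne volume 0] with x hx
    rw [norm_div, norm_div, norm_real, Real.norm_eq_abs]
    exact div_le_div_of_nonneg_left (norm_nonneg _) (abs_pos.mpr hx)
      (abs_le_norm_ofReal_sub_I_mul x ε)
  · filter_upwards [Measure.ae_ne volume 0] with x hx
    refine tendsto_const_nhds.div ?_ (ofReal_ne_zero.mpr hx)
    simpa using ((by fun_prop : Continuous fun ε : ℝ => (x : ℂ) - I * ε).tendsto 0).mono_left
      nhdsWithin_le_nhds

theorem tendsto_setIntegral_div_of_norm_sub_le (hf : Integrable f)
    (hlip : ∀ x, ‖f x - f 0‖ ≤ C * |x|) :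
    Tendsto (fun δ : ℝ => ∫ x in {x | δ ≤ |x|}, f x / x) (𝓝[>] 0)
      (𝓝 (∫ x, subValueAtZero f x / x)) := by
  refine (tendsto_setIntegral_le_abs (integrable_subValueAtZero_div hf hlip)).congr' ?_
  filter_upwards [self_mem_nhdsWithin] with δ (hδ : 0 < δ)
  exact (setIntegral_div_eq_setIntegral_subValueAtZero_div hf hδ).symm

theorem tendsto_integral_div_ofReal_sub_I_mul_of_norm_sub_le (hf : Integrable f)
    (hlip : ∀ x, ‖f x - f 0‖ ≤ C * |x|) :
    Tendsto (fun ε : ℝ => ∫ x, f x / ((x : ℂ) - I * ε)) (𝓝[>] 0)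
      (𝓝 ((∫ x, subValueAtZero f x / x) + I * π * f 0)) := by
  refine ((tendsto_integral_subValueAtZero_div_ofReal_sub_I_mul hf hlip).add
    (tendsto_intervalIntegral_inv_ofReal_sub_I_mul.mul_const (f 0))).congr' ?_
  filter_upwards [self_mem_nhdsWithin] with ε (hε : 0 < ε)
  exact (integral_div_ofReal_sub_I_mul_eq hf hε.ne').symm

end

/-- Sokhotski–Plemelj: the regularized Cauchy kernel splits into the principal value
plus iπ·δ. -/
theorem sokhotski_plemelj (ψ : SchwartzMap ℝ ℂ) :
    ∃ pv : ℂ,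
      Tendsto (fun δ : ℝ => ∫ η in {η : ℝ | δ ≤ |η|}, ψ η / (η : ℂ))
        (nhdsWithin 0 (Set.Ioi 0)) (nhds pv) ∧
      Tendsto (fun ε : ℝ => ∫ η : ℝ, ψ η / ((η : ℂ) - Complex.I * (ε : ℂ)))
        (nhdsWithin 0 (Set.Ioi 0))
        (nhds (pv + Complex.I * (Real.pi : ℂ) * ψ 0)) := by
  have hlip (x : ℝ) : ‖ψ x - ψ 0‖ ≤ SchwartzMap.seminorm ℝ 0 1 ψ * |x| := by
    simpa using ψ.norm_sub_le_seminorm_mul_abs 0 x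
  exact ⟨_, tendsto_setIntegral_div_of_norm_sub_le ψ.integrable hlip,
    tendsto_integral_div_ofReal_sub_I_mul_of_norm_sub_le ψ.integrable hlip⟩
end
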